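/- Let E be a 3-dimensional real inner product space and R an algebraic curvature tensor on E with signed sectional curvatures and cvc(0), and assume that not all sectional curvatures of R vanish. Then there exists a unit vector ξ ∈ E, unique up to sign, such that: (a) for a unit vector v ∈ E, the Jacobi operator J_v vanishes identically on v^⊥ if and only if v = ξ or v = −ξ; and (b) for every unit vector v ∉ {ξ, −ξ}, the kernel of J_v restricted to v^⊥ is exactly the 1-dimensional span of ξ − ⟨ξ, v⟩·v. -/

import Mathlib

open scoped RealInnerProductSpace

/-!
In dimension three a bivector `x ∧ y` is the vector `x × y` (cross product relative to an
orthonormal basis), so `R(x,y,z,w) = Ψ(x × y, z × w)` for a symmetric bilinear form `Ψ`, and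
`sec(x ∧ y) = -Ψ(x × y, x × y)`. Signed sectional curvature makes `Ψ` semidefinite, so its null
vectors form its kernel `K`. By cvc(0) every unit vector is orthogonal to a nonzero vector of `K`,
which forces `dim K ≥ 2`; nonflatness gives `K ≠ E`, so `K = ξ^⊥` and
`R(x,y,z,w) = μ ⟪ξ, x × y⟫ ⟪ξ, z × w⟫` with `μ ≠ 0`. Then `J_v w = 0` iff `⟪ξ, w × v⟫ = 0`
(i.e. `w ∈ span(ξ, v)`) or `ξ × v = 0` (i.e. `v = ±ξ`).
-/

/-- An algebraic curvature tensor on a real inner product space `E`: a multilinear map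
`R : E × E × E × E → ℝ` with the symmetries of the Riemann curvature tensor.
For vectors `x y z`, the value `R x y z ·` represents the linear functional
`w ↦ ⟨R(x,y)z, w⟩` determined by the curvature operator `R(x,y)z`. -/
structure AlgCurvTensor (E : Type*) [NormedAddCommGroup E] [InnerProductSpace ℝ E] where
  R : E →ₗ[ℝ] E →ₗ[ℝ] E →ₗ[ℝ] E →ₗ[ℝ] ℝ
  antisym_fst : ∀ x y z w : E, R x y z w = - R y x z w
  antisym_snd : ∀ x y z w : E, R x y z w = - R x y w z
  pair_symm : ∀ x y z w : E, R x y z w = R z w x y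
  bianchi : ∀ x y z w : E, R x y z w + R y z x w + R z x y w = 0

/-- `T` has signed sectional curvatures: either all sectional curvatures are `≥ 0`
or all are `≤ 0`. -/
def AlgCurvTensor.SignedSec {E : Type*} [NormedAddCommGroup E] [InnerProductSpace ℝ E]
    (T : AlgCurvTensor E) : Prop :=
  (∀ x y : E, ‖x‖ = 1 → ‖y‖ = 1 → ⟪x, y⟫ = 0 → 0 ≤ T.R x y y x) ∨
  (∀ x y : E, ‖x‖ = 1 → ‖y‖ = 1 → ⟪x, y⟫ = 0 → T.R x y y x ≤ 0)

/-- `T` has constant vector curvature zero: every unit vector is contained in a flat plane. -/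
def AlgCurvTensor.CVC0 {E : Type*} [NormedAddCommGroup E] [InnerProductSpace ℝ E]
    (T : AlgCurvTensor E) : Prop :=
  ∀ v : E, ‖v‖ = 1 → ∃ w : E, ‖w‖ = 1 ∧ ⟪v, w⟫ = 0 ∧ T.R v w w v = 0

open scoped Matrix

namespace OrthonormalBasis

variable {E : Type*} [NormedAddCommGroup E] [InnerProductSpace ℝ E]
  (e : OrthonormalBasis (Fin 3) ℝ E)

noncomputable def coordEquiv : E ≃ₗ[ℝ] (Fin 3 → ℝ) :=
  e.repr.toLinearEquiv.trans (WithLp.linearEquiv 2 ℝ (Fin 3 → ℝ))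

noncomputable def cross : E →ₗ[ℝ] E →ₗ[ℝ] E :=
  (crossProduct.compl₁₂ e.coordEquiv.toLinearMap e.coordEquiv.toLinearMap).compr₂
    e.coordEquiv.symm.toLinearMap

lemma finrank_eq_three (e : OrthonormalBasis (Fin 3) ℝ E) : Module.finrank ℝ E = 3 := by
  simp [Module.finrank_eq_card_basis e.toBasis]

@[simp] lemma coordEquiv_apply (x : E) (i : Fin 3) : e.coordEquiv x i = ⟪e i, x⟫ := by
  simp [coordEquiv, e.repr_apply_apply]

lemma coordEquiv_cross (x y : E) :
    e.coordEquiv (e.cross x y) = e.coordEquiv x ⨯₃ e.coordEquiv y := by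
  simp [cross]

lemma inner_eq_dotProduct (x y : E) : ⟪x, y⟫ = e.coordEquiv x ⬝ᵥ e.coordEquiv y := by
  rw [← e.repr.inner_map_map, EuclideanSpace.inner_eq_star_dotProduct, dotProduct_comm]
  rfl

lemma inner_cross_eq_dotProduct (x y z : E) :
    ⟪x, e.cross y z⟫ = e.coordEquiv x ⬝ᵥ e.coordEquiv y ⨯₃ e.coordEquiv z := by
  rw [inner_eq_dotProduct, coordEquiv_cross]

lemma cross_anticomm (x y : E) : e.cross y x = -e.cross x y :=
  e.coordEquiv.injective <| by
    rw [map_neg, coordEquiv_cross, coordEquiv_cross, _root_.cross_anticomm]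

@[simp] lemma cross_self (x : E) : e.cross x x = 0 :=
  e.coordEquiv.injective <| by simp [coordEquiv_cross]

@[simp] lemma inner_cross_self_left (x y : E) : ⟪x, e.cross x y⟫ = 0 := by
  rw [inner_cross_eq_dotProduct, dot_self_cross]

@[simp] lemma inner_cross_self_right (x y : E) : ⟪y, e.cross x y⟫ = 0 := by
  rw [inner_cross_eq_dotProduct, dot_cross_self]

lemma inner_cross_cyclic (x y z : E) : ⟪x, e.cross y z⟫ = ⟪y, e.cross z x⟫ := by
  rw [inner_cross_eq_dotProduct, inner_cross_eq_dotProduct, triple_product_permutation]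

lemma inner_cross_cross (x y z w : E) :
    ⟪e.cross x y, e.cross z w⟫ = ⟪x, z⟫ * ⟪y, w⟫ - ⟪x, w⟫ * ⟪y, z⟫ := by
  rw [inner_eq_dotProduct, coordEquiv_cross, coordEquiv_cross, cross_dot_cross,
    inner_eq_dotProduct, inner_eq_dotProduct, inner_eq_dotProduct, inner_eq_dotProduct]

lemma cross_cross (x y z : E) : e.cross x (e.cross y z) = ⟪x, z⟫ • y - ⟪x, y⟫ • z :=
  e.coordEquiv.injective <| by
    rw [coordEquiv_cross, coordEquiv_cross, cross_cross_eq_smul_sub_smul', map_sub, map_smul,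
      map_smul, inner_eq_dotProduct, inner_eq_dotProduct, dotProduct_comm (e.coordEquiv y)]

lemma apply_eq_sum_inner_cross {F : Type*} [AddCommGroup F] [Module ℝ F]
    (B : E →ₗ[ℝ] E →ₗ[ℝ] F) (hB : ∀ x, B x x = 0) (x y : E) :
    B x y = ∑ i, ⟪e i, e.cross x y⟫ • B (e (i + 1)) (e (i + 2)) := by
  have hanti (a b : E) : B b a = -B a b := by
    have := hB (a + b)
    simp only [map_add, LinearMap.add_apply, hB, zero_add, add_zero] at this
    exact eq_neg_of_add_eq_zero_left this
  conv_lhs => rw [← e.sum_repr' x, ← e.sum_repr' y]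
  simp only [← coordEquiv_apply, coordEquiv_cross, cross_apply, Fin.sum_univ_three, map_add,
    map_smul, LinearMap.add_apply, LinearMap.smul_apply, hB]
  rw [hanti (e 0) (e 1), hanti (e 2) (e 0), hanti (e 1) (e 2)]
  simp only [Fin.isValue, Fin.reduceAdd, Matrix.cons_val]
  module

lemma mem_span_cross_of_inner_eq_zero {x y p : E} (hx : ⟪x, p⟫ = 0) (hy : ⟪y, p⟫ = 0)
    (hxy : e.cross x y ≠ 0) : p ∈ Submodule.span ℝ {e.cross x y} := by
  set n := e.cross x y
  have hpn : e.cross p n = 0 := by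
    rw [e.cross_cross, real_inner_comm, hy, real_inner_comm, hx, zero_smul, zero_smul, sub_zero]
  have hnpn : ⟪n, n⟫ • p = ⟪n, p⟫ • n := by
    rw [← sub_eq_zero, ← e.cross_cross, hpn, map_zero]
  have hnn : ⟪n, n⟫ ≠ 0 := inner_self_ne_zero.mpr hxy
  refine Submodule.mem_span_singleton.mpr ⟨⟪n, p⟫ / ⟪n, n⟫, ?_⟩
  rw [div_eq_inv_mul, mul_smul, ← hnpn, smul_smul, inv_mul_cancel₀ hnn, one_smul]

lemma norm_cross_sq_of_norm_eq_one {x y : E} (hx : ‖x‖ = 1) (hy : ‖y‖ = 1) :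
    ‖e.cross x y‖ ^ 2 = 1 - ⟪x, y⟫ ^ 2 := by
  rw [← real_inner_self_eq_norm_sq, inner_cross_cross, real_inner_self_eq_norm_sq,
    real_inner_self_eq_norm_sq, hx, hy, real_inner_comm y x]
  ring

lemma cross_eq_zero_iff_of_norm_eq_one {x y : E} (hx : ‖x‖ = 1) (hy : ‖y‖ = 1) :
    e.cross x y = 0 ↔ y = x ∨ y = -x := by
  rw [← norm_eq_zero, ← sq_eq_zero_iff, e.norm_cross_sq_of_norm_eq_one hx hy, sub_eq_zero,
    eq_comm, sq_eq_one_iff, inner_eq_one_iff_of_norm_eq_one hx hy,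
    inner_eq_neg_one_iff_of_norm_eq_one hx hy, eq_comm (a := x), eq_comm (a := x),
    neg_eq_iff_eq_neg]

lemma exists_cross_eq_of_norm_eq_one {u : E} (hu : ‖u‖ = 1) :
    ∃ x y : E, ‖x‖ = 1 ∧ ‖y‖ = 1 ∧ ⟪x, y⟫ = 0 ∧ e.cross x y = u := by
  have : FiniteDimensional ℝ E := e.toBasis.finiteDimensional_of_finite
  have hu0 : u ≠ 0 := norm_ne_zero_iff.mp (hu ▸ one_ne_zero)
  have hperp : (ℝ ∙ u)ᗮ ≠ ⊥ := by
    intro h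
    have := (ℝ ∙ u).finrank_add_finrank_orthogonal
    rw [h, finrank_bot, finrank_span_singleton hu0, e.finrank_eq_three] at this
    simp at this
  obtain ⟨x₀, hx₀u, hx₀⟩ := Submodule.exists_mem_ne_zero_of_ne_bot hperp
  set x := ‖x₀‖⁻¹ • x₀
  have hx : ‖x‖ = 1 := norm_smul_inv_norm hx₀
  have hux : ⟪u, x⟫ = 0 :=
    Submodule.mem_orthogonal_singleton_iff_inner_right.mp (Submodule.smul_mem _ _ hx₀u)
  refine ⟨x, e.cross u x, hx, ?_, e.inner_cross_self_right u x, ?_⟩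
  · rw [← pow_eq_one_iff_of_nonneg (norm_nonneg _) two_ne_zero,
      e.norm_cross_sq_of_norm_eq_one hu hx, hux]
    ring
  · rw [e.cross_cross, real_inner_self_eq_norm_sq, hx, real_inner_comm, hux]
    simp

lemma exists_smul_cross_eq (p : E) :
    ∃ r : ℝ, ∃ x y : E, ‖x‖ = 1 ∧ ‖y‖ = 1 ∧ ⟪x, y⟫ = 0 ∧ r • e.cross x y = p := by
  rcases eq_or_ne p 0 with rfl | hp
  · obtain ⟨x, y, hx, hy, hxy, -⟩ := e.exists_cross_eq_of_norm_eq_one (e.orthonormal.1 0)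
    exact ⟨0, x, y, hx, hy, hxy, zero_smul _ _⟩
  · obtain ⟨x, y, hx, hy, hxy, hp'⟩ :=
      e.exists_cross_eq_of_norm_eq_one (norm_smul_inv_norm (𝕜 := ℝ) hp)
    refine ⟨‖p‖, x, y, hx, hy, hxy, ?_⟩
    simp [hp', smul_smul, hp]

end OrthonormalBasis

namespace LinearMap.BilinForm

lemma mem_ker_of_apply_self_eq_zero {R M : Type*} [CommRing R] [LinearOrder R]
    [IsStrictOrderedRing R] [AddCommGroup M] [Module R M] {B : LinearMap.BilinForm R M}
    (hB : B.IsSymm) (hs : (∀ x, 0 ≤ B x x) ∨ (∀ x, B x x ≤ 0)) {x : M} (hx : B x x = 0) :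
    x ∈ LinearMap.ker B := by
  have of_nonneg (B' : LinearMap.BilinForm R M) (hB' : B'.IsSymm) (hs' : ∀ x, 0 ≤ B' x x)
      (hx' : B' x x = 0) (y : M) : B' x y = 0 := by
    have := apply_sq_le_of_symm B' hs' (isSymm_iff.mp hB') x y
    rw [hx', zero_mul] at this
    exact pow_eq_zero_iff two_ne_zero |>.mp (le_antisymm this (sq_nonneg _))
  refine LinearMap.mem_ker.mpr (LinearMap.ext fun y => ?_)
  rcases hs with hs | hs
  · exact of_nonneg B hB hs hx y
  · simpa using of_nonneg (-B) hB.neg (fun z => by simpa using hs z) (by simp [hx]) y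

lemma apply_eq_mul_inner_mul_inner {E : Type*} [NormedAddCommGroup E] [InnerProductSpace ℝ E]
    {Ψ : LinearMap.BilinForm ℝ E} (hΨ : Ψ.IsSymm) {ξ : E} (hξ : ‖ξ‖ = 1)
    (hker : (ℝ ∙ ξ)ᗮ ≤ LinearMap.ker Ψ) (u v : E) :
    Ψ u v = Ψ ξ ξ * ⟪ξ, u⟫ * ⟪ξ, v⟫ := by
  have hleft (u w : E) : Ψ u w = ⟪ξ, u⟫ * Ψ ξ w := by
    have hmem : u - ⟪ξ, u⟫ • ξ ∈ (ℝ ∙ ξ)ᗮ := by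
      rw [Submodule.mem_orthogonal_singleton_iff_inner_right, inner_sub_right,
        real_inner_smul_right, real_inner_self_eq_norm_sq, hξ]
      ring
    have := LinearMap.congr_fun (LinearMap.mem_ker.mp (hker hmem)) w
    rw [map_sub, map_smul, LinearMap.sub_apply, LinearMap.smul_apply, smul_eq_mul,
      LinearMap.zero_apply, sub_eq_zero] at this
    exact this
  rw [hleft u v, hΨ.eq ξ v, hleft v ξ, hΨ.eq ξ ξ]
  ring

end LinearMap.BilinForm

namespace Submodule

variable {E : Type*} [NormedAddCommGroup E] [InnerProductSpace ℝ E]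

lemma two_le_finrank_of_forall_exists_inner_eq_zero [FiniteDimensional ℝ E] [Nontrivial E]
    (K : Submodule ℝ E) (h : ∀ c : E, ‖c‖ = 1 → ∃ u ∈ K, u ≠ 0 ∧ ⟪c, u⟫ = 0) :
    2 ≤ Module.finrank ℝ K := by
  obtain ⟨c, hc⟩ := exists_norm_eq E zero_le_one
  obtain ⟨u₀, hu₀K, hu₀, -⟩ := h c hc
  obtain ⟨u, huK, hu, hu₀u⟩ := h (‖u₀‖⁻¹ • u₀) (norm_smul_inv_norm hu₀)
  by_contra! hK
  obtain ⟨k, rfl⟩ := ((K.finrank_le_one_iff_isPrincipal).mp (by omega)).principal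
  obtain ⟨a, rfl⟩ := mem_span_singleton.mp hu₀K
  obtain ⟨b, rfl⟩ := mem_span_singleton.mp huK
  simp_all [real_inner_smul_left, real_inner_smul_right]

lemma exists_norm_eq_one_eq_orthogonal_span_singleton [FiniteDimensional ℝ E]
    (K : Submodule ℝ E) (hK : Module.finrank ℝ K + 1 = Module.finrank ℝ E) :
    ∃ ξ : E, ‖ξ‖ = 1 ∧ K = (ℝ ∙ ξ)ᗮ := by
  have hKperp : Module.finrank ℝ Kᗮ = 1 := by
    have := K.finrank_add_finrank_orthogonal
    omega
  obtain ⟨ξ₀, hξ₀K, hξ₀⟩ := exists_mem_ne_zero_of_ne_bot (p := Kᗮ) fun h => by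
    rw [h, finrank_bot] at hKperp
    exact zero_ne_one hKperp
  set ξ := ‖ξ₀‖⁻¹ • ξ₀
  have hξ1 : ‖ξ‖ = 1 := norm_smul_inv_norm hξ₀
  have hξ : ξ ≠ 0 := norm_ne_zero_iff.mp (hξ1 ▸ one_ne_zero)
  refine ⟨ξ, hξ1, ?_⟩
  have : (ℝ ∙ ξ) = Kᗮ :=
    eq_of_le_of_finrank_eq ((span_singleton_le_iff_mem _ _).mpr (smul_mem _ _ hξ₀K))
      (by rw [finrank_span_singleton hξ, hKperp])
  rw [this, orthogonal_orthogonal]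

end Submodule

namespace AlgCurvTensor

variable {E : Type*} [NormedAddCommGroup E] [InnerProductSpace ℝ E] (T : AlgCurvTensor E)
  (e : OrthonormalBasis (Fin 3) ℝ E)

lemma R_self (x : E) : T.R x x = 0 := by
  ext z w
  have := T.antisym_fst x x z w
  simp only [LinearMap.zero_apply]
  linarith

lemma R_apply_self (x y z : E) : T.R x y z z = 0 := by
  have := T.antisym_snd x y z z
  linarith

/-- The curvature operator as a form on `Λ²E`, with `e i` standing for `e (i + 1) ∧ e (i + 2)`. -/
noncomputable def bivectorForm : LinearMap.BilinForm ℝ E :=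
  ∑ i, ∑ j, T.R (e (i + 1)) (e (i + 2)) (e (j + 1)) (e (j + 2)) •
    (innerₛₗ ℝ (e i)).smulRight (innerₛₗ ℝ (e j))

lemma bivectorForm_apply (p q : E) :
    T.bivectorForm e p q =
      ∑ i, ∑ j, T.R (e (i + 1)) (e (i + 2)) (e (j + 1)) (e (j + 2)) * (⟪e i, p⟫ * ⟪e j, q⟫) := by
  simp only [bivectorForm, LinearMap.sum_apply, LinearMap.smul_apply, LinearMap.coe_smulRight,
    innerₛₗ_apply_apply, smul_eq_mul]

lemma bivectorForm_isSymm : (T.bivectorForm e).IsSymm := by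
  refine ⟨fun p q => ?_⟩
  rw [bivectorForm_apply, bivectorForm_apply, Finset.sum_comm]
  refine Finset.sum_congr rfl fun i _ => Finset.sum_congr rfl fun j _ => ?_
  rw [T.pair_symm]
  ring

lemma R_eq_bivectorForm_cross (x y z w : E) :
    T.R x y z w = T.bivectorForm e (e.cross x y) (e.cross z w) := by
  rw [OrthonormalBasis.apply_eq_sum_inner_cross (e := e) (F := E →ₗ[ℝ] E →ₗ[ℝ] ℝ) T.R T.R_self,
    bivectorForm_apply]
  simp only [LinearMap.sum_apply, LinearMap.smul_apply, smul_eq_mul]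
  refine Finset.sum_congr rfl fun i _ => ?_
  rw [OrthonormalBasis.apply_eq_sum_inner_cross (e := e) (F := ℝ) (T.R (e (i + 1)) (e (i + 2)))
    (T.R_apply_self _ _), Finset.mul_sum]
  refine Finset.sum_congr rfl fun j _ => ?_
  rw [smul_eq_mul]
  ring

lemma R_apply_eq_neg_bivectorForm (x y : E) :
    T.R x y y x = -T.bivectorForm e (e.cross x y) (e.cross x y) := by
  rw [T.R_eq_bivectorForm_cross e, e.cross_anticomm x y, map_neg]

lemma bivectorForm_semidef (hs : T.SignedSec) :
    (∀ p, 0 ≤ T.bivectorForm e p p) ∨ (∀ p, T.bivectorForm e p p ≤ 0) := by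
  have hform (p : E) : ∃ r : ℝ, ∃ x y : E, ‖x‖ = 1 ∧ ‖y‖ = 1 ∧ ⟪x, y⟫ = 0 ∧
      T.bivectorForm e p p = -(r ^ 2 * T.R x y y x) := by
    obtain ⟨r, x, y, hx, hy, hxy, rfl⟩ := e.exists_smul_cross_eq p
    refine ⟨r, x, y, hx, hy, hxy, ?_⟩
    simp only [T.R_apply_eq_neg_bivectorForm e, map_smul, LinearMap.smul_apply, smul_eq_mul]
    ring
  rcases hs with hs | hs
  · refine Or.inr fun p => ?_
    obtain ⟨r, x, y, hx, hy, hxy, h⟩ := hform p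
    rw [h, neg_nonpos]
    exact mul_nonneg (sq_nonneg r) (hs x y hx hy hxy)
  · refine Or.inl fun p => ?_
    obtain ⟨r, x, y, hx, hy, hxy, h⟩ := hform p
    rw [h, neg_nonneg]
    exact mul_nonpos_of_nonneg_of_nonpos (sq_nonneg r) (hs x y hx hy hxy)

lemma exists_mem_ker_bivectorForm (hs : T.SignedSec) (hcvc : T.CVC0) {c : E} (hc : ‖c‖ = 1) :
    ∃ u ∈ LinearMap.ker (T.bivectorForm e), u ≠ 0 ∧ ⟪c, u⟫ = 0 := by
  obtain ⟨w, hw, hcw, hflat⟩ := hcvc c hc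
  refine ⟨e.cross c w, ?_, fun h => ?_, e.inner_cross_self_left c w⟩
  · refine LinearMap.BilinForm.mem_ker_of_apply_self_eq_zero (T.bivectorForm_isSymm e)
      (T.bivectorForm_semidef e hs) ?_
    rw [← neg_eq_zero, ← T.R_apply_eq_neg_bivectorForm e, hflat]
  · simpa [h, hcw] using e.norm_cross_sq_of_norm_eq_one hc hw

theorem exists_R_eq_mul_inner_cross_mul_inner_cross (hs : T.SignedSec) (hcvc : T.CVC0)
    (hnonflat : ¬ ∀ x y : E, ‖x‖ = 1 → ‖y‖ = 1 → ⟪x, y⟫ = 0 → T.R x y y x = 0) :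
    ∃ ξ : E, ∃ μ : ℝ, ‖ξ‖ = 1 ∧ μ ≠ 0 ∧
      ∀ x y z w, T.R x y z w = μ * ⟪ξ, e.cross x y⟫ * ⟪ξ, e.cross z w⟫ := by
  have : FiniteDimensional ℝ E := e.toBasis.finiteDimensional_of_finite
  have : Nontrivial E := Module.nontrivial_of_finrank_eq_succ e.finrank_eq_three
  set Ψ := T.bivectorForm e
  push Not at hnonflat
  obtain ⟨x, y, hx, hy, hxy, hR⟩ := hnonflat
  have hΨ : Ψ (e.cross x y) (e.cross x y) ≠ 0 := by
    rwa [T.R_apply_eq_neg_bivectorForm e, neg_ne_zero] at hR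
  have hKtop : LinearMap.ker Ψ ≠ ⊤ := fun h => hΨ (by simp [LinearMap.ker_eq_top.mp h])
  have hK2 := (LinearMap.ker Ψ).two_le_finrank_of_forall_exists_inner_eq_zero
    fun c hc => T.exists_mem_ker_bivectorForm e hs hcvc hc
  obtain ⟨ξ, hξ, hK⟩ := (LinearMap.ker Ψ).exists_norm_eq_one_eq_orthogonal_span_singleton (by
    have := Submodule.finrank_lt hKtop
    rw [e.finrank_eq_three] at this ⊢
    omega)
  have hrank :=
    LinearMap.BilinForm.apply_eq_mul_inner_mul_inner (T.bivectorForm_isSymm e) hξ hK.ge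
  refine ⟨ξ, Ψ ξ ξ, hξ, fun h => hΨ (by rw [hrank, h]; ring), fun x y z w => ?_⟩
  rw [T.R_eq_bivectorForm_cross e, hrank]

variable {T e} {ξ : E} {μ : ℝ}

lemma forall_R_eq_zero_iff (hμ : μ ≠ 0)
    (hR : ∀ x y z w, T.R x y z w = μ * ⟪ξ, e.cross x y⟫ * ⟪ξ, e.cross z w⟫) (v w : E) :
    (∀ u, T.R w v v u = 0) ↔ ⟪ξ, e.cross w v⟫ = 0 ∨ e.cross ξ v = 0 := by
  have h (u : E) : T.R w v v u = μ * ⟪ξ, e.cross w v⟫ * ⟪u, e.cross ξ v⟫ := by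
    rw [hR, e.inner_cross_cyclic ξ v u, e.inner_cross_cyclic v u ξ]
  simp only [h]
  refine ⟨fun H => by simpa [hμ] using H (e.cross ξ v), ?_⟩
  rintro (h0 | h0) u <;> simp [h0]

lemma forall_R_eq_zero_iff_eq_or_eq_neg (hμ : μ ≠ 0)
    (hR : ∀ x y z w, T.R x y z w = μ * ⟪ξ, e.cross x y⟫ * ⟪ξ, e.cross z w⟫) (hξ : ‖ξ‖ = 1)
    {v : E} (hv : ‖v‖ = 1) :
    (∀ w, ⟪v, w⟫ = 0 → ∀ u, T.R w v v u = 0) ↔ (v = ξ ∨ v = -ξ) := by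
  rw [← e.cross_eq_zero_iff_of_norm_eq_one hξ hv]
  refine ⟨fun h => ?_, fun h w _ => (forall_R_eq_zero_iff hμ hR v w).mpr (Or.inr h)⟩
  have := (forall_R_eq_zero_iff hμ hR v _).mp (h _ (e.inner_cross_self_right ξ v))
  rwa [e.inner_cross_cyclic ξ, e.cross_anticomm ξ v, inner_neg_right, neg_eq_zero,
    inner_self_eq_zero, or_self] at this

lemma forall_R_eq_zero_iff_mem_span (hμ : μ ≠ 0)
    (hR : ∀ x y z w, T.R x y z w = μ * ⟪ξ, e.cross x y⟫ * ⟪ξ, e.cross z w⟫)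
    {v w : E} (hv : ‖v‖ = 1) (hξv : e.cross ξ v ≠ 0) (hvw : ⟪v, w⟫ = 0) :
    (∀ u, T.R w v v u = 0) ↔ w ∈ Submodule.span ℝ {ξ - ⟪ξ, v⟫ • v} := by
  have hline : ξ - ⟪ξ, v⟫ • v = -e.cross v (e.cross v ξ) := by
    rw [e.cross_cross, real_inner_self_eq_norm_sq, hv, real_inner_comm]
    module
  have hn : e.cross v (e.cross v ξ) ≠ 0 := by
    intro h
    rw [h, neg_zero, sub_eq_zero] at hline
    apply hξv
    rw [hline, map_smul, LinearMap.smul_apply, e.cross_self, smul_zero]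
  rw [hline, ← Set.neg_singleton, Submodule.span_neg, forall_R_eq_zero_iff hμ hR v w,
    or_iff_left hξv, e.inner_cross_cyclic ξ w v]
  refine ⟨fun h => e.mem_span_cross_of_inner_eq_zero hvw (by rwa [real_inner_comm]) hn,
    fun h => ?_⟩
  obtain ⟨s, rfl⟩ := Submodule.mem_span_singleton.mp h
  rw [real_inner_smul_left, real_inner_comm, e.inner_cross_self_right, mul_zero]

end AlgCurvTensor

/-- For a nonisotropic algebraic curvature tensor on a `3`-dimensional inner product space
with signed sectional curvatures and `cvc(0)`, there is a unit vector `ξ`, unique up to sign,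
such that: (a) the Jacobi operator `J_v` of a unit vector `v` vanishes identically on `v^⊥`
(expressed by the vanishing of all inner products `⟨R(w,v)v, u⟩ = R w v v u` for `w ⟂ v`)
if and only if `v = ±ξ`; and (b) for every unit vector `v ∉ {ξ, -ξ}`, the kernel of `J_v`
restricted to `v^⊥` is exactly the line spanned by `ξ - ⟪ξ, v⟫ • v`. (The uniqueness of `ξ`
up to sign is immediate from the "if and only if" in (a).) -/
theorem cvc0_nonisotropic_line {E : Type*} [NormedAddCommGroup E]
    [InnerProductSpace ℝ E] [FiniteDimensional ℝ E] (hdim : Module.finrank ℝ E = 3)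
    (T : AlgCurvTensor E) (hsigned : T.SignedSec) (hcvc : T.CVC0)
    (hnonflat : ¬ ∀ x y : E, ‖x‖ = 1 → ‖y‖ = 1 → ⟪x, y⟫ = 0 → T.R x y y x = 0) :
    ∃ ξ : E, ‖ξ‖ = 1 ∧
      (∀ v : E, ‖v‖ = 1 →
        ((∀ w : E, ⟪v, w⟫ = 0 → ∀ u : E, T.R w v v u = 0) ↔ (v = ξ ∨ v = -ξ))) ∧
      (∀ v : E, ‖v‖ = 1 → v ≠ ξ → v ≠ -ξ →
        ∀ w : E, ⟪v, w⟫ = 0 →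
          ((∀ u : E, T.R w v v u = 0) ↔ w ∈ Submodule.span ℝ {ξ - ⟪ξ, v⟫ • v})) := by
  let e : OrthonormalBasis (Fin 3) ℝ E := (stdOrthonormalBasis ℝ E).reindex (finCongr hdim)
  obtain ⟨ξ, μ, hξ, hμ, hR⟩ :=
    T.exists_R_eq_mul_inner_cross_mul_inner_cross e hsigned hcvc hnonflat
  refine ⟨ξ, hξ, fun v hv => AlgCurvTensor.forall_R_eq_zero_iff_eq_or_eq_neg hμ hR hξ hv,
    fun v hv hvξ hvξ' w hvw => AlgCurvTensor.forall_R_eq_zero_iff_mem_span hμ hR hv ?_ hvw⟩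
  rw [ne_eq, e.cross_eq_zero_iff_of_norm_eq_one hξ hv]
  tauto
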